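/- For any finitely many nonnegative reals x_1,...,x_n with sum S, partitioned into M classes by round-robin after sorting in nonincreasing order, the maximum class sum is at most twice the optimal (minimum possible maximum) class sum when the optimal is at least max_i x_i. -/
import Mathlib


/-- LPT-style bound: round-robin assignment of items sorted in nonincreasing
order of size achieves a makespan of at most twice the optimal makespan `OPT`,
provided `OPT` is at least the maximum item size (and `OPT` is achieved by some
assignment). -/
theorem stmt11 (n M : ℕ) (hn : 0 < n) (hM : 1 ≤ M)
    (x : Fin n → ℝ) (hpos : ∀ i, 0 ≤ x i) (hsorted : Antitone x)
    (OPT : ℝ)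
    (hmax : ∀ i, x i ≤ OPT)
    (hach : ∃ g : Fin n → Fin M, ∀ j : Fin M,
      ∑ i ∈ Finset.univ.filter (fun i => g i = j), x i ≤ OPT) :
    ∀ j : Fin M,
      ∑ i ∈ Finset.univ.filter (fun i : Fin n => i.val % M = j.val), x i
        ≤ 2 * OPT := by
  classical
  intro j
  have hOPT0 : 0 ≤ OPT := le_trans (hpos ⟨0, hn⟩) (hmax ⟨0, hn⟩)
  obtain ⟨g, hg⟩ := hach
  set S := ∑ i, x i with hSdef
  have hSM : S ≤ M * OPT := by
    have h1 : S = ∑ k : Fin M, ∑ i ∈ Finset.univ.filter (fun i => g i = k), x i := by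
      rw [Finset.sum_fiberwise]
    rw [h1]
    calc ∑ k : Fin M, ∑ i ∈ Finset.univ.filter (fun i => g i = k), x i
        ≤ ∑ _k : Fin M, OPT := Finset.sum_le_sum fun k _ => hg k
      _ = M * OPT := by simp [Finset.sum_const, nsmul_eq_mul]
  set P := Finset.univ.filter (fun i : Fin n => i.val % M = j.val) with hPdef
  set F := P.filter (fun i => M ≤ i.val) with hFdef
  set H := P.filter (fun i => ¬ M ≤ i.val) with hHdef
  have hsplit : ∑ i ∈ F, x i + ∑ i ∈ H, x i = ∑ i ∈ P, x i :=
    Finset.sum_filter_add_sum_filter_not P _ x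
  -- Head bound
  have hhead : ∑ i ∈ H, x i ≤ OPT := by
    have hcard : H.card ≤ 1 := by
      apply Finset.card_le_one.mpr
      intro a ha b hb
      simp only [hHdef, hPdef, Finset.mem_filter, Finset.mem_univ, true_and] at ha hb
      have ha2 : a.val = j.val := by
        rw [← ha.1, Nat.mod_eq_of_lt (by omega)]
      have hb2 : b.val = j.val := by
        rw [← hb.1, Nat.mod_eq_of_lt (by omega)]
      exact Fin.ext (by omega)
    calc ∑ i ∈ H, x i ≤ H.card • OPT :=
          Finset.sum_le_card_nsmul H x OPT (fun i _ => hmax i)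
      _ = (H.card : ℝ) * OPT := nsmul_eq_mul _ _
      _ ≤ 1 * OPT := by
          apply mul_le_mul_of_nonneg_right _ hOPT0
          exact_mod_cast hcard
      _ = OPT := one_mul _
  -- Tail bound
  have htail : ∑ i ∈ F, x i ≤ OPT := by
    have hMpos : (0:ℝ) < M := by exact_mod_cast hM
    have key : (M:ℝ) * ∑ i ∈ F, x i ≤ S := by
      set φ : Fin n × Fin M → Fin n :=
        fun p => ⟨(p.1.val - M + p.2.val) % n, Nat.mod_lt _ hn⟩ with hφ
      have hmem : ∀ p ∈ F ×ˢ (Finset.univ : Finset (Fin M)),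
          p.1.val % M = j.val ∧ M ≤ p.1.val := by
        intro p hp
        simp only [Finset.mem_product, hFdef, hPdef, Finset.mem_filter,
          Finset.mem_univ, true_and] at hp
        exact hp.1
      have hφval : ∀ p ∈ F ×ˢ (Finset.univ : Finset (Fin M)),
          (φ p).val = p.1.val - M + p.2.val := by
        intro p hp
        have h := hmem p hp
        have h1 : p.1.val < n := p.1.isLt
        have h2 : p.2.val < M := p.2.isLt
        exact Nat.mod_eq_of_lt (by omega)
      have step1 : (M:ℝ) * ∑ i ∈ F, x i
          = ∑ p ∈ F ×ˢ (Finset.univ : Finset (Fin M)), x p.1 := by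
        rw [Finset.sum_product]
        simp [Finset.sum_const, nsmul_eq_mul, Finset.mul_sum, mul_comm]
      have step2 : ∑ p ∈ F ×ˢ (Finset.univ : Finset (Fin M)), x p.1
          ≤ ∑ p ∈ F ×ˢ (Finset.univ : Finset (Fin M)), x (φ p) := by
        apply Finset.sum_le_sum
        intro p hp
        apply hsorted
        have := hφval p hp
        have h := hmem p hp
        have h2 : p.2.val < M := p.2.isLt
        show (φ p) ≤ p.1
        rw [Fin.le_def, this]
        omega
      have hinj : ∀ p ∈ F ×ˢ (Finset.univ : Finset (Fin M)),
          ∀ q ∈ F ×ˢ (Finset.univ : Finset (Fin M)), φ p = φ q → p = q := by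
        intro p hp q hq heq
        have hpv := hφval p hp
        have hqv := hφval q hq
        have hpm := hmem p hp
        have hqm := hmem q hq
        have heqv : p.1.val - M + p.2.val = q.1.val - M + q.2.val := by
          rw [← hpv, ← hqv, heq]
        have hsum : p.1.val + p.2.val = q.1.val + q.2.val := by omega
        have hp1 : p.1.val = M * (p.1.val / M) + j.val := by
          conv_lhs => rw [← Nat.div_add_mod p.1.val M]
          rw [hpm.1]
        have hq1 : q.1.val = M * (q.1.val / M) + j.val := by
          conv_lhs => rw [← Nat.div_add_mod q.1.val M]
          rw [hqm.1]
        have hmm : M * (p.1.val / M) + p.2.val = M * (q.1.val / M) + q.2.val := by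
          omega
        have hr : p.2.val = q.2.val := by
          have e1 : (M * (p.1.val / M) + p.2.val) % M = p.2.val := by
            rw [Nat.mul_add_mod, Nat.mod_eq_of_lt p.2.isLt]
          have e2 : (M * (q.1.val / M) + q.2.val) % M = q.2.val := by
            rw [Nat.mul_add_mod, Nat.mod_eq_of_lt q.2.isLt]
          rw [← e1, ← e2, hmm]
        have hi : p.1.val = q.1.val := by omega
        exact Prod.ext (Fin.ext hi) (Fin.ext hr)
      have step3 : ∑ p ∈ F ×ˢ (Finset.univ : Finset (Fin M)), x (φ p)
          = ∑ y ∈ (F ×ˢ (Finset.univ : Finset (Fin M))).image φ, x y :=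
        (Finset.sum_image hinj).symm
      have step4 : ∑ y ∈ (F ×ˢ (Finset.univ : Finset (Fin M))).image φ, x y ≤ S := by
        apply Finset.sum_le_sum_of_subset_of_nonneg (Finset.subset_univ _)
        intro i _ _
        exact hpos i
      linarith
    have : (M:ℝ) * ∑ i ∈ F, x i ≤ (M:ℝ) * OPT := le_trans key hSM
    exact le_of_mul_le_mul_left this hMpos
  linarith
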